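/- In the setting of the balanced transition kernel on a rooted forest where every node has exactly A actions: for each depth h ∈ [H] and each node x_h at depth h, A*(x_h) ≥ A(x_h)·A^{H-h}; consequently, for any transition kernel p^ν, ∑_{x_h ∈ X_h} A(x_h)·p^ν_{1:h}(x_h)/p*_{1:h}(x_h) ≤ A^{h-H}·A_X. -/

import Mathlib

open Finset
open scoped Classical

/-- `u` is a child of `v` (via some action `a`). -/
def upRel {X : Type*} (par : X → Option (X × ℕ)) (u v : X) : Prop :=
  ∃ a, par u = some (v, a)

/-- `y` is a descendant of `x` (including `x` itself). -/
def isDesc {X : Type*} (par : X → Option (X × ℕ)) (x y : X) : Prop :=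
  Relation.ReflTransGen (upRel par) y x

/-- `A*(x)`: the total number of actions in the subtree rooted at `x`. -/
noncomputable def Astar {X : Type*} [Fintype X] (par : X → Option (X × ℕ))
    (A : X → ℕ) (x : X) : ℕ :=
  ∑ y ∈ Finset.univ.filter (fun y => isDesc par x y), A y

/-- `A_X`: the total number of actions in the forest. -/
def AtotX {X : Type*} [Fintype X] (A : X → ℕ) : ℕ := ∑ x, A x

/-- The children of the pair (node `y`, action `a`). -/
noncomputable def childrenOf {X : Type*} [Fintype X] (par : X → Option (X × ℕ))
    (y : X) (a : ℕ) : Finset X :=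
  Finset.univ.filter (fun z => par z = some (y, a))

/-!
Every node has `A₀` actions and every (node, action) pair above depth `H` has a child, so by
induction on `H - h` the subtree of a depth-`h` node `x` holds at least `A(x)·A₀^{H-h}` actions.

For the second claim let `T_h = ∑_{dep x = h} A*(x)·pν(x)/p*(x)` and
`S_h = ∑_{dep x = h} A(x)·pν(x)/p*(x)`. The balanced recursion makes `p*(z)/A*(z)` the same for all
children `z` of a pair `(x, a)`, so conservation of `pν` along `(x, a)` turns the children's
contribution into `(A*(x) - A(x))·pν(x)/p*(x)`. Hence `T_1 = A_X` and `T_{h+1} = T_h - S_h`, so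
`∑_{k<h} S_k + T_h = A_X` and `T_h ≤ A_X`; the first claim gives `A₀^{H-h}·S_h ≤ T_h`.
-/

section Forest

variable {X : Type*} {par : X → Option (X × ℕ)} {dep : X → ℕ}

lemma upRel_rightUnique : Relator.RightUnique (upRel par) := by
  rintro u v w ⟨a, hv⟩ ⟨b, hw⟩
  rw [hv, Option.some_inj, Prod.mk.injEq] at hw
  exact hw.1

lemma isDesc.dep_le (hd : ∀ u v, upRel par u v → dep u = dep v + 1) {x y : X}
    (h : isDesc par x y) : dep x ≤ dep y := by
  induction h with
  | refl => rfl
  | tail _ hstep ih => have := hd _ _ hstep; omega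

lemma isDesc.eq_of_dep_eq (hd : ∀ u v, upRel par u v → dep u = dep v + 1) {x y : X}
    (h : isDesc par x y) (he : dep x = dep y) : x = y := by
  rcases h.cases_tail with rfl | ⟨c, hxc, hcy⟩
  · rfl
  · have := hd _ _ hcy; have := isDesc.dep_le hd hxc; omega

lemma eq_of_isDesc_of_dep_eq (hd : ∀ u v, upRel par u v → dep u = dep v + 1) {x₁ x₂ y : X}
    (h₁ : isDesc par x₁ y) (h₂ : isDesc par x₂ y) (he : dep x₁ = dep x₂) : x₁ = x₂ := by
  rcases Relation.ReflTransGen.total_of_right_unique upRel_rightUnique h₁ h₂ with h | h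
  · exact (isDesc.eq_of_dep_eq hd h he.symm).symm
  · exact isDesc.eq_of_dep_eq hd h he

variable [Fintype X]

noncomputable def children (par : X → Option (X × ℕ)) (x : X) : Finset X :=
  univ.filter (upRel par · x)

noncomputable def descendants (par : X → Option (X × ℕ)) (x : X) : Finset X :=
  univ.filter (isDesc par x)

@[simp]
lemma mem_children {x z : X} : z ∈ children par x ↔ upRel par z x := by
  simp [children]

@[simp]
lemma mem_descendants {x y : X} : y ∈ descendants par x ↔ isDesc par x y := by
  simp [descendants]

lemma mem_childrenOf {y z : X} {a : ℕ} : z ∈ childrenOf par y a ↔ par z = some (y, a) := by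
  simp [childrenOf]

lemma Astar_eq_sum_descendants (A : X → ℕ) (x : X) :
    Astar par A x = ∑ y ∈ descendants par x, A y := rfl

lemma descendants_eq_insert_biUnion (x : X) :
    descendants par x = insert x ((children par x).biUnion (descendants par)) := by
  ext y
  simp only [mem_descendants, mem_insert, mem_biUnion, mem_children]
  constructor
  · intro h
    rcases h.cases_tail with rfl | ⟨c, hyc, hcx⟩
    · exact Or.inl rfl
    · exact Or.inr ⟨c, hcx, hyc⟩
  · rintro (rfl | ⟨c, hcx, hyc⟩)
    · exact Relation.ReflTransGen.refl
    · exact hyc.tail hcx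

lemma not_mem_biUnion_children_descendants (hd : ∀ u v, upRel par u v → dep u = dep v + 1)
    (x : X) : x ∉ (children par x).biUnion (descendants par) := by
  simp only [mem_biUnion, mem_children, mem_descendants, not_exists, not_and]
  intro z hzx hxz
  have := hd _ _ hzx
  have := hxz.dep_le hd
  omega

lemma pairwiseDisjoint_descendants_children (hd : ∀ u v, upRel par u v → dep u = dep v + 1)
    (x : X) : (children par x : Set X).PairwiseDisjoint (descendants par) := by
  intro z₁ hz₁ z₂ hz₂ hne
  refine disjoint_left.mpr fun y hy₁ hy₂ => hne ?_
  simp only [mem_coe, mem_children, mem_descendants] at *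
  exact eq_of_isDesc_of_dep_eq hd hy₁ hy₂ (by rw [hd _ _ hz₁, hd _ _ hz₂])

lemma Astar_eq_add_sum_children (hd : ∀ u v, upRel par u v → dep u = dep v + 1)
    (A : X → ℕ) (x : X) : Astar par A x = A x + ∑ z ∈ children par x, Astar par A z := by
  rw [Astar_eq_sum_descendants, descendants_eq_insert_biUnion,
    sum_insert (not_mem_biUnion_children_descendants hd x),
    sum_biUnion (pairwiseDisjoint_descendants_children hd x)]
  rfl

lemma pairwiseDisjoint_children (s : Set X) : s.PairwiseDisjoint (children par) := by
  intro x₁ _ x₂ _ hne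
  refine disjoint_left.mpr fun z hz₁ hz₂ => hne ?_
  rw [mem_children] at hz₁ hz₂
  exact upRel_rightUnique hz₁ hz₂

lemma pairwiseDisjoint_childrenOf (x : X) (s : Set ℕ) :
    s.PairwiseDisjoint (childrenOf par x) := by
  intro a _ b _ hne
  refine disjoint_left.mpr fun z hz₁ hz₂ => hne ?_
  rw [mem_childrenOf] at hz₁ hz₂
  rw [hz₁, Option.some_inj, Prod.mk.injEq] at hz₂
  exact hz₂.2

lemma children_eq_biUnion_childrenOf {A : X → ℕ}
    (hact : ∀ x y a, par x = some (y, a) → a < A y) (x : X) :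
    children par x = (range (A x)).biUnion (childrenOf par x) := by
  ext z
  simp only [mem_children, mem_biUnion, mem_range, mem_childrenOf, upRel]
  exact ⟨fun ⟨a, ha⟩ => ⟨a, hact _ _ _ ha, ha⟩, fun ⟨a, _, ha⟩ => ⟨a, ha⟩⟩

lemma sum_children_eq_sum_childrenOf {M : Type*} [AddCommMonoid M] {A : X → ℕ}
    (hact : ∀ x y a, par x = some (y, a) → a < A y) (x : X) (f : X → M) :
    ∑ z ∈ children par x, f z = ∑ a ∈ range (A x), ∑ z ∈ childrenOf par x a, f z := by
  rw [children_eq_biUnion_childrenOf hact, sum_biUnion (pairwiseDisjoint_childrenOf x _)]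

lemma filter_dep_succ_eq_biUnion_children (hd : ∀ u v, upRel par u v → dep u = dep v + 1)
    (hroot : ∀ x, par x = none → dep x = 1) {h : ℕ} (hh : 1 ≤ h) :
    univ.filter (fun z => dep z = h + 1) =
      (univ.filter (fun x => dep x = h)).biUnion (children par) := by
  ext z
  simp only [mem_filter, mem_univ, true_and, mem_biUnion, mem_children]
  constructor
  · intro hz
    obtain ⟨⟨x, a⟩, hpz⟩ := Option.ne_none_iff_exists'.mp fun h0 => by
      have := hroot z h0; omega
    exact ⟨x, by have := hd z x ⟨a, hpz⟩; omega, a, hpz⟩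
  · rintro ⟨x, rfl, hzx⟩
    exact hd _ _ hzx

end Forest

section Astar

variable {X : Type*} [Fintype X] {par : X → Option (X × ℕ)} {dep : X → ℕ} {A : X → ℕ}

lemma Astar_eq_add_sum_childrenOf (hd : ∀ u v, upRel par u v → dep u = dep v + 1)
    (hact : ∀ x y a, par x = some (y, a) → a < A y) (x : X) :
    Astar par A x = A x + ∑ a ∈ range (A x), ∑ z ∈ childrenOf par x a, Astar par A z := by
  rw [Astar_eq_add_sum_children hd, sum_children_eq_sum_childrenOf hact]

lemma le_Astar (x : X) : A x ≤ Astar par A x :=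
  single_le_sum (fun _ _ => Nat.zero_le _) (mem_descendants.mpr Relation.ReflTransGen.refl)

lemma Astar_pos (hA : ∀ x, 0 < A x) (x : X) : 0 < Astar par A x :=
  (hA x).trans_le (le_Astar x)

lemma le_AtotX (x : X) : A x ≤ AtotX A :=
  single_le_sum (fun _ _ => Nat.zero_le _) (mem_univ x)

lemma mul_pow_le_Astar {H A₀ : ℕ} (hd : ∀ u v, upRel par u v → dep u = dep v + 1)
    (hact : ∀ x y a, par x = some (y, a) → a < A y)
    (hchild : ∀ x a, dep x < H → a < A x → ∃ y, par y = some (x, a))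
    (hdepH : ∀ x, dep x ≤ H) (hA : ∀ x, A₀ ≤ A x) (x : X) :
    A x * A₀ ^ (H - dep x) ≤ Astar par A x := by
  induction hn : H - dep x generalizing x with
  | zero => simpa using le_Astar x
  | succ n ih =>
    have hx : dep x < H := by have := hdepH x; omega
    have hbranch : ∀ a ∈ range (A x),
        A₀ ^ (n + 1) ≤ ∑ z ∈ childrenOf par x a, Astar par A z := by
      intro a ha
      obtain ⟨y, hy⟩ := hchild x a hx (mem_range.mp ha)
      have hdy := hd y x ⟨a, hy⟩
      calc A₀ ^ (n + 1) = A₀ * A₀ ^ n := pow_succ' A₀ n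
        _ ≤ A y * A₀ ^ n := Nat.mul_le_mul_right _ (hA y)
        _ ≤ Astar par A y := ih y (by omega)
        _ ≤ ∑ z ∈ childrenOf par x a, Astar par A z :=
          single_le_sum (fun _ _ => Nat.zero_le _) (mem_childrenOf.mpr hy)
    calc A x * A₀ ^ (n + 1) = ∑ _a ∈ range (A x), A₀ ^ (n + 1) := by simp
      _ ≤ ∑ a ∈ range (A x), ∑ z ∈ childrenOf par x a, Astar par A z := sum_le_sum hbranch
      _ ≤ Astar par A x := by
        rw [Astar_eq_add_sum_childrenOf hd hact x]; exact Nat.le_add_left _ _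

end Astar

section Kernel

variable {X : Type*} [Fintype X] {par : X → Option (X × ℕ)} {dep : X → ℕ} {A : X → ℕ}

/-- `p x` is the path product `p*_{1:h}(x)` of the balanced kernel, `h = dep x`. -/
structure IsBalancedPathProb (par : X → Option (X × ℕ)) (A : X → ℕ) (p : X → ℝ) : Prop where
  root : ∀ x, par x = none → p x = (Astar par A x : ℝ) / (AtotX A : ℝ)
  step : ∀ x y a, par x = some (y, a) →
    p x = p y * ((Astar par A x : ℝ) / ∑ z ∈ childrenOf par y a, (Astar par A z : ℝ))

/-- `p x` is the path product `p_{1:h}(x)` of some transition kernel: the kernel at each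
(node, action) pair is a distribution on its children, so path products are conserved. -/
structure IsPathProb (par : X → Option (X × ℕ)) (dep : X → ℕ) (A : X → ℕ) (H : ℕ)
    (p : X → ℝ) : Prop where
  root : ∑ x ∈ univ.filter (fun x => par x = none), p x = 1
  step : ∀ x a, dep x < H → a < A x → ∑ z ∈ childrenOf par x a, p z = p x

noncomputable def layerSum (dep : X → ℕ) (f : X → ℝ) (h : ℕ) : ℝ :=
  ∑ x ∈ univ.filter (fun x => dep x = h), f x

lemma layerSum_mono {f g : X → ℝ} {h : ℕ} (hfg : ∀ x, dep x = h → f x ≤ g x) :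
    layerSum dep f h ≤ layerSum dep g h :=
  sum_le_sum fun x hx => hfg x (mem_filter.mp hx).2

lemma layerSum_nonneg {f : X → ℝ} (hf : ∀ x, 0 ≤ f x) (h : ℕ) : 0 ≤ layerSum dep f h :=
  sum_nonneg fun x _ => hf x

lemma IsBalancedPathProb.pos {p : X → ℝ} (hp : IsBalancedPathProb par A p)
    (hd : ∀ u v, upRel par u v → dep u = dep v + 1) (hA : ∀ x, 0 < A x) (x : X) :
    0 < p x := by
  induction hn : dep x using Nat.strong_induction_on generalizing x with
  | _ n ih =>
    have hAstar : (0 : ℝ) < Astar par A x := by exact_mod_cast Astar_pos hA x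
    cases hpx : par x with
    | none =>
      rw [hp.root x hpx]
      exact div_pos hAstar (by exact_mod_cast (hA x).trans_le (le_AtotX x))
    | some ya =>
      obtain ⟨y, a⟩ := ya
      have hxy := hd x y ⟨a, hpx⟩
      have hsib : (0 : ℝ) < ∑ z ∈ childrenOf par y a, (Astar par A z : ℝ) :=
        sum_pos' (fun _ _ => Nat.cast_nonneg _) ⟨x, mem_childrenOf.mpr hpx, hAstar⟩
      rw [hp.step x y a hpx]
      exact mul_pos (ih (dep y) (by omega) y rfl) (div_pos hAstar hsib)

lemma sum_childrenOf_Astar_mul_div {p ν : X → ℝ} (hp : IsBalancedPathProb par A p)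
    (hA : ∀ x, 0 < A x) {x : X} {a : ℕ} (hν : ∑ z ∈ childrenOf par x a, ν z = ν x) :
    ∑ z ∈ childrenOf par x a, (Astar par A z : ℝ) * ν z / p z =
      (∑ z ∈ childrenOf par x a, (Astar par A z : ℝ)) * ν x / p x := by
  set C := ∑ z ∈ childrenOf par x a, (Astar par A z : ℝ) with hC_def
  have hterm : ∀ z ∈ childrenOf par x a, (Astar par A z : ℝ) * ν z / p z = C / p x * ν z := by
    intro z hz
    have hAstar : (0 : ℝ) < Astar par A z := by exact_mod_cast Astar_pos hA z
    have hC : 0 < C := sum_pos' (fun _ _ => Nat.cast_nonneg _) ⟨z, hz, hAstar⟩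
    rw [hp.step z x a (mem_childrenOf.mp hz), ← hC_def]
    field_simp
  rw [sum_congr rfl hterm, ← mul_sum, hν, mul_div_right_comm]

lemma sum_children_Astar_mul_div {H : ℕ} {p ν : X → ℝ} (hp : IsBalancedPathProb par A p)
    (hν : IsPathProb par dep A H ν) (hd : ∀ u v, upRel par u v → dep u = dep v + 1)
    (hact : ∀ x y a, par x = some (y, a) → a < A y) (hA : ∀ x, 0 < A x) {x : X}
    (hx : dep x < H) :
    ∑ z ∈ children par x, (Astar par A z : ℝ) * ν z / p z =
      ((Astar par A x : ℝ) - A x) * ν x / p x := by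
  have hAstar : (Astar par A x : ℝ) - A x =
      ∑ a ∈ range (A x), ∑ z ∈ childrenOf par x a, (Astar par A z : ℝ) := by
    rw [Astar_eq_add_sum_childrenOf hd hact x]
    push_cast
    ring
  rw [sum_children_eq_sum_childrenOf hact, hAstar, sum_mul, sum_div]
  exact sum_congr rfl fun a ha =>
    sum_childrenOf_Astar_mul_div hp hA (hν.step x a hx (mem_range.mp ha))

lemma layerSum_Astar_one {H : ℕ} {p ν : X → ℝ} (hp : IsBalancedPathProb par A p)
    (hν : IsPathProb par dep A H ν) (hroot : ∀ x, par x = none ↔ dep x = 1)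
    (hA : ∀ x, 0 < A x) :
    layerSum dep (fun x => (Astar par A x : ℝ) * ν x / p x) 1 = AtotX A := by
  have hroots : univ.filter (fun x => dep x = 1) = univ.filter (fun x => par x = none) := by
    simp only [hroot]
  have hterm : ∀ x ∈ univ.filter (fun x => par x = none),
      (Astar par A x : ℝ) * ν x / p x = AtotX A * ν x := by
    intro x hx
    have hAstar : (Astar par A x : ℝ) ≠ 0 := by exact_mod_cast (Astar_pos hA x).ne'
    have hAtot : (AtotX A : ℝ) ≠ 0 := by
      exact_mod_cast ((hA x).trans_le (le_AtotX x)).ne'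
    rw [hp.root x (mem_filter.mp hx).2]
    field_simp
  rw [layerSum, hroots, sum_congr rfl hterm, ← mul_sum, hν.root, mul_one]

lemma layerSum_Astar_succ {H : ℕ} {p ν : X → ℝ} (hp : IsBalancedPathProb par A p)
    (hν : IsPathProb par dep A H ν) (hd : ∀ u v, upRel par u v → dep u = dep v + 1)
    (hact : ∀ x y a, par x = some (y, a) → a < A y) (hroot : ∀ x, par x = none → dep x = 1)
    (hA : ∀ x, 0 < A x) {h : ℕ} (h1 : 1 ≤ h) (hH : h < H) :
    layerSum dep (fun x => (Astar par A x : ℝ) * ν x / p x) (h + 1) =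
      layerSum dep (fun x => (Astar par A x : ℝ) * ν x / p x) h -
        layerSum dep (fun x => (A x : ℝ) * ν x / p x) h := by
  rw [layerSum, filter_dep_succ_eq_biUnion_children hd hroot h1,
    sum_biUnion (pairwiseDisjoint_children _), layerSum, layerSum, ← sum_sub_distrib]
  refine sum_congr rfl fun x hx => ?_
  rw [sum_children_Astar_mul_div hp hν hd hact hA ((mem_filter.mp hx).2.trans_lt hH)]
  ring

theorem sum_layerSum_add_layerSum_Astar {H : ℕ} {p ν : X → ℝ} (hp : IsBalancedPathProb par A p)
    (hν : IsPathProb par dep A H ν) (hd : ∀ u v, upRel par u v → dep u = dep v + 1)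
    (hact : ∀ x y a, par x = some (y, a) → a < A y) (hroot : ∀ x, par x = none ↔ dep x = 1)
    (hA : ∀ x, 0 < A x) {h : ℕ} (h1 : 1 ≤ h) (hH : h ≤ H) :
    ∑ k ∈ Ico 1 h, layerSum dep (fun x => (A x : ℝ) * ν x / p x) k +
      layerSum dep (fun x => (Astar par A x : ℝ) * ν x / p x) h = AtotX A := by
  induction h, h1 using Nat.le_induction with
  | base => simpa using layerSum_Astar_one hp hν hroot hA
  | succ k hk ih =>
    rw [sum_Ico_succ_top hk, layerSum_Astar_succ hp hν hd hact (fun x => (hroot x).mp) hA hk hH,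
      ← ih (by omega)]
    ring

lemma layerSum_Astar_le_AtotX {H : ℕ} {p ν : X → ℝ} (hp : IsBalancedPathProb par A p)
    (hν : IsPathProb par dep A H ν) (hν_nonneg : ∀ x, 0 ≤ ν x)
    (hd : ∀ u v, upRel par u v → dep u = dep v + 1)
    (hact : ∀ x y a, par x = some (y, a) → a < A y) (hroot : ∀ x, par x = none ↔ dep x = 1)
    (hA : ∀ x, 0 < A x) {h : ℕ} (h1 : 1 ≤ h) (hH : h ≤ H) :
    layerSum dep (fun x => (Astar par A x : ℝ) * ν x / p x) h ≤ AtotX A := by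
  rw [← sum_layerSum_add_layerSum_Astar hp hν hd hact hroot hA h1 hH]
  refine le_add_of_nonneg_left (sum_nonneg fun k _ => layerSum_nonneg (fun x => ?_) k)
  exact div_nonneg (mul_nonneg (Nat.cast_nonneg _) (hν_nonneg x)) (hp.pos hd hA x).le

end Kernel

theorem stmt_7_general {X : Type*} [Fintype X]
    (H : ℕ) (dep : X → ℕ) (A : X → ℕ) (par : X → Option (X × ℕ))
    (A₀ : ℕ) (hA₀ : 1 ≤ A₀) (hAfix : ∀ x, A x = A₀)
    (hdep : ∀ x, 1 ≤ dep x ∧ dep x ≤ H)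
    (hroot : ∀ x, par x = none ↔ dep x = 1)
    (hpar : ∀ x y a, par x = some (y, a) → dep x = dep y + 1 ∧ a < A y)
    (hchild : ∀ x a, dep x < H → a < A x → ∃ y, par y = some (x, a))
    (pstar : X → ℝ)
    (hpstar_root : ∀ x, par x = none → pstar x = (Astar par A x : ℝ) / (AtotX A : ℝ))
    (hpstar_step : ∀ x y a, par x = some (y, a) →
      pstar x = pstar y *
        ((Astar par A x : ℝ) / ∑ z ∈ childrenOf par y a, (Astar par A z : ℝ)))
    (pnu : X → ℝ) (hpnu_nonneg : ∀ x, 0 ≤ pnu x)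
    (hpnu_root : ∑ x ∈ Finset.univ.filter (fun x => par x = none), pnu x = 1)
    (hpnu_step : ∀ x a, dep x < H → a < A x →
      ∑ z ∈ childrenOf par x a, pnu z = pnu x) :
    (∀ x, (A x : ℝ) * (A₀ : ℝ) ^ (H - dep x) ≤ (Astar par A x : ℝ)) ∧
      ∀ h, 1 ≤ h → h ≤ H →
        ∑ x ∈ Finset.univ.filter (fun x => dep x = h), (A x : ℝ) * pnu x / pstar x ≤
          (AtotX A : ℝ) / (A₀ : ℝ) ^ (H - h) := by
  have hd : ∀ u v, upRel par u v → dep u = dep v + 1 := fun u v ⟨a, ha⟩ => (hpar u v a ha).1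
  have hact : ∀ x y a, par x = some (y, a) → a < A y := fun x y a ha => (hpar x y a ha).2
  have hA : ∀ x, 0 < A x := fun x => hAfix x ▸ hA₀
  have hp : IsBalancedPathProb par A pstar := ⟨hpstar_root, hpstar_step⟩
  have hν : IsPathProb par dep A H pnu := ⟨hpnu_root, hpnu_step⟩
  have hAstar : ∀ x, (A x : ℝ) * (A₀ : ℝ) ^ (H - dep x) ≤ Astar par A x := fun x => by
    exact_mod_cast mul_pow_le_Astar hd hact hchild (fun x => (hdep x).2) (fun x => (hAfix x).ge) x
  refine ⟨hAstar, fun h h1 hH => ?_⟩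
  rw [le_div_iff₀ (pow_pos (by exact_mod_cast hA₀) _)]
  calc layerSum dep (fun x => (A x : ℝ) * pnu x / pstar x) h * (A₀ : ℝ) ^ (H - h)
      = layerSum dep (fun x => (A x : ℝ) * (A₀ : ℝ) ^ (H - dep x) * (pnu x / pstar x)) h := by
        rw [layerSum, layerSum, sum_mul]
        refine sum_congr rfl fun x hx => ?_
        rw [(mem_filter.mp hx).2]
        ring
    _ ≤ layerSum dep (fun x => (Astar par A x : ℝ) * pnu x / pstar x) h := by
        refine layerSum_mono fun x _ => ?_
        rw [mul_div_assoc]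
        exact mul_le_mul_of_nonneg_right (hAstar x)
          (div_nonneg (hpnu_nonneg x) (hp.pos hd hA x).le)
    _ ≤ AtotX A := layerSum_Astar_le_AtotX hp hν hpnu_nonneg hd hact hroot hA h1 hH

/-- On a rooted forest of depth `H` where every node has exactly `A₀` actions:
`A*(x_h) ≥ A(x_h)·A₀^{H-h}` for every node `x_h` at depth `h`, and consequently,
for any transition kernel `pν`,
`∑_{x_h ∈ X_h} A(x_h)·pν(x_h)/p*(x_h) ≤ A₀^{h-H}·A_X` for every depth `h ∈ [H]`. -/
theorem stmt_7 {X : Type*} [Fintype X]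
    (H : ℕ) (hH : 1 ≤ H) (dep : X → ℕ) (A : X → ℕ) (par : X → Option (X × ℕ))
    (A₀ : ℕ) (hA₀ : 1 ≤ A₀) (hAfix : ∀ x, A x = A₀)
    (hdep : ∀ x, 1 ≤ dep x ∧ dep x ≤ H)
    (hroot : ∀ x, par x = none ↔ dep x = 1)
    (hpar : ∀ x y a, par x = some (y, a) → dep x = dep y + 1 ∧ a < A y)
    (hchild : ∀ x a, dep x < H → a < A x → ∃ y, par y = some (x, a))
    (pstar : X → ℝ)
    (hpstar_root : ∀ x, par x = none → pstar x = (Astar par A x : ℝ) / (AtotX A : ℝ))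
    (hpstar_step : ∀ x y a, par x = some (y, a) →
      pstar x = pstar y *
        ((Astar par A x : ℝ) / ∑ z ∈ childrenOf par y a, (Astar par A z : ℝ)))
    (pnu : X → ℝ) (hpnu_nonneg : ∀ x, 0 ≤ pnu x)
    (hpnu_root : ∑ x ∈ Finset.univ.filter (fun x => par x = none), pnu x = 1)
    (hpnu_step : ∀ x a, dep x < H → a < A x →
      ∑ z ∈ childrenOf par x a, pnu z = pnu x) :
    (∀ x, (A x : ℝ) * (A₀ : ℝ) ^ (H - dep x) ≤ (Astar par A x : ℝ)) ∧
      ∀ h, 1 ≤ h → h ≤ H →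
        ∑ x ∈ Finset.univ.filter (fun x => dep x = h), (A x : ℝ) * pnu x / pstar x ≤
          (AtotX A : ℝ) / (A₀ : ℝ) ^ (H - h) :=
  stmt_7_general H dep A par A₀ hA₀ hAfix hdep hroot hpar hchild pstar hpstar_root hpstar_step pnu
    hpnu_nonneg hpnu_root hpnu_step
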